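/- Let q, r : ℝ → ℝ be smooth, and define φ : ℝ² → ℝ³ by φ(u, v) = ∫₀^u ( −(1 + q(t)²)/2, (1 − q(t)²)/2, q(t) ) dt + ∫₀^v ( (1 + r(t)²)/2, (1 − r(t)²)/2, r(t) ) dt (the normalized Weierstrass formula). Then: (i) ⟨φ_u, φ_u⟩ = 0, ⟨φ_v, φ_v⟩ = 0, and 2⟨φ_u, φ_v⟩ = (1 + q(u)r(v))²; (ii) φ_{uv} = 0, so φ is a timelike minimal immersion on the region where 1 + q(u)r(v) ≠ 0; (iii) on that region the map ψ(u, v) = ( −q(u) + r(v), −q(u) − r(v), 1 − q(u)r(v) )/(1 + q(u)r(v)) satisfies ⟨ψ, ψ⟩ = 1, ⟨ψ, φ_u⟩ = 0, ⟨ψ, φ_v⟩ = 0, so ψ is the Gauss map; (iv) ⟨φ_{uu}, ψ⟩ = q'(u) and ⟨φ_{vv}, ψ⟩ = r'(v), i.e. the conformal factor is e^{ω} = (1 + qr)² and the Hopf differential coefficients are Q = q_u and R = r_v. -/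

import Mathlib

/-- The Minkowski scalar product `⟨x, y⟩ = −x₁y₁ + x₂y₂ + x₃y₃` on `ℝ³`. -/
def mink (x y : Fin 3 → ℝ) : ℝ := -(x 0 * y 0) + x 1 * y 1 + x 2 * y 2

/-- Partial derivative in the first null variable `u`. -/
noncomputable def pdu (f : ℝ × ℝ → Fin 3 → ℝ) (p : ℝ × ℝ) : Fin 3 → ℝ :=
  deriv (fun u => f (u, p.2)) p.1

/-- Partial derivative in the second null variable `v`. -/
noncomputable def pdv (f : ℝ × ℝ → Fin 3 → ℝ) (p : ℝ × ℝ) : Fin 3 → ℝ :=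
  deriv (fun v => f (p.1, v)) p.2

/-- The normalized Weierstrass formula of Magid:
`φ(u,v) = ∫₀ᵘ(−(1+q²)/2, (1−q²)/2, q) + ∫₀ᵛ((1+r²)/2, (1−r²)/2, r)`. -/
noncomputable def weier (q r : ℝ → ℝ) (p : ℝ × ℝ) : Fin 3 → ℝ :=
  (∫ t in (0 : ℝ)..p.1, ![-(1 + (q t) ^ 2) / 2, (1 - (q t) ^ 2) / 2, q t]) +
  (∫ t in (0 : ℝ)..p.2, ![(1 + (r t) ^ 2) / 2, (1 - (r t) ^ 2) / 2, r t])

/-- The Gauss map of the normalized Weierstrass surface. -/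
noncomputable def weierGauss (q r : ℝ → ℝ) (p : ℝ × ℝ) : Fin 3 → ℝ :=
  (1 + q p.1 * r p.2)⁻¹ •
    ![-(q p.1) + r p.2, -(q p.1) - r p.2, 1 - q p.1 * r p.2]

section aux

variable {q r : ℝ → ℝ}

lemma contA (hq : Continuous q) :
    Continuous fun t => ![-(1 + (q t) ^ 2) / 2, (1 - (q t) ^ 2) / 2, q t] := by
  refine continuous_pi fun i => ?_
  fin_cases i <;> simp <;> fun_prop

lemma contB (hr : Continuous r) :
    Continuous fun t => ![(1 + (r t) ^ 2) / 2, (1 - (r t) ^ 2) / 2, r t] := by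
  refine continuous_pi fun i => ?_
  fin_cases i <;> simp <;> fun_prop

lemma pdu_weier (hq : Continuous q) (p : ℝ × ℝ) :
    pdu (weier q r) p = ![-(1 + (q p.1) ^ 2) / 2, (1 - (q p.1) ^ 2) / 2, q p.1] := by
  unfold pdu weier
  simp only [deriv_add_const]
  exact Continuous.deriv_integral _ (contA hq) 0 p.1

lemma pdv_weier (hr : Continuous r) (p : ℝ × ℝ) :
    pdv (weier q r) p = ![(1 + (r p.2) ^ 2) / 2, (1 - (r p.2) ^ 2) / 2, r p.2] := by
  unfold pdv weier
  simp only [deriv_const_add]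
  exact Continuous.deriv_integral _ (contB hr) 0 p.2

lemma hasDerivA (hq : ContDiff ℝ (⊤ : ℕ∞) q) (u : ℝ) :
    HasDerivAt (fun u => ![-(1 + (q u) ^ 2) / 2, (1 - (q u) ^ 2) / 2, q u])
      ![-(q u * deriv q u), -(q u * deriv q u), deriv q u] u := by
  have hq' : HasDerivAt q (deriv q u) u :=
    (hq.differentiable (by simp) u).hasDerivAt
  rw [hasDerivAt_pi]
  intro i
  fin_cases i
  · show HasDerivAt (fun u => -(1 + (q u) ^ 2) / 2) (-(q u * deriv q u)) u
    have h := (((hq'.fun_pow 2).const_add 1).fun_neg).div_const 2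
    exact h.congr_deriv (by ring)
  · show HasDerivAt (fun u => (1 - (q u) ^ 2) / 2) (-(q u * deriv q u)) u
    have h := ((hq'.fun_pow 2).const_sub 1).div_const 2
    exact h.congr_deriv (by ring)
  · exact hq'

lemma hasDerivB (hr : ContDiff ℝ (⊤ : ℕ∞) r) (v : ℝ) :
    HasDerivAt (fun v => ![(1 + (r v) ^ 2) / 2, (1 - (r v) ^ 2) / 2, r v])
      ![r v * deriv r v, -(r v * deriv r v), deriv r v] v := by
  have hr' : HasDerivAt r (deriv r v) v :=
    (hr.differentiable (by simp) v).hasDerivAt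
  rw [hasDerivAt_pi]
  intro i
  fin_cases i
  · show HasDerivAt (fun v => (1 + (r v) ^ 2) / 2) (r v * deriv r v) v
    have h := ((hr'.fun_pow 2).const_add 1).div_const 2
    exact h.congr_deriv (by ring)
  · show HasDerivAt (fun v => (1 - (r v) ^ 2) / 2) (-(r v * deriv r v)) v
    have h := ((hr'.fun_pow 2).const_sub 1).div_const 2
    exact h.congr_deriv (by ring)
  · exact hr'

lemma pduu_weier (hq : ContDiff ℝ (⊤ : ℕ∞) q) (p : ℝ × ℝ) :
    pdu (pdu (weier q r)) p =
      ![-(q p.1 * deriv q p.1), -(q p.1 * deriv q p.1), deriv q p.1] := by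
  unfold pdu
  have : (fun u => pdu (weier q r) (u, p.2)) =
      fun u => ![-(1 + (q u) ^ 2) / 2, (1 - (q u) ^ 2) / 2, q u] := by
    funext u
    exact pdu_weier hq.continuous (u, p.2)
  rw [show (fun u => deriv (fun u_1 => weier q r (u_1, (u, p.2).2)) u) =
      fun u => pdu (weier q r) (u, p.2) from rfl, this]
  exact (hasDerivA hq p.1).deriv

lemma pdvv_weier (hr : ContDiff ℝ (⊤ : ℕ∞) r) (p : ℝ × ℝ) :
    pdv (pdv (weier q r)) p =
      ![r p.2 * deriv r p.2, -(r p.2 * deriv r p.2), deriv r p.2] := by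
  unfold pdv
  have : (fun v => pdv (weier q r) (p.1, v)) =
      fun v => ![(1 + (r v) ^ 2) / 2, (1 - (r v) ^ 2) / 2, r v] := by
    funext v
    exact pdv_weier hr.continuous (p.1, v)
  rw [show (fun v => deriv (fun v_1 => weier q r ((p.1, v).1, v_1)) v) =
      fun v => pdv (weier q r) (p.1, v) from rfl, this]
  exact (hasDerivB hr p.2).deriv

lemma pdv_pdu_weier (hq : Continuous q) (p : ℝ × ℝ) :
    pdv (pdu (weier q r)) p = 0 := by
  unfold pdv
  have : (fun v => pdu (weier q r) (p.1, v)) =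
      fun _ => ![-(1 + (q p.1) ^ 2) / 2, (1 - (q p.1) ^ 2) / 2, q p.1] := by
    funext v
    exact pdu_weier hq (p.1, v)
  rw [this]
  exact deriv_const _ _

end aux

/-- for the normalized Weierstrass formula `φ`:
(i) `⟨φ_u, φ_u⟩ = ⟨φ_v, φ_v⟩ = 0` and `2⟨φ_u, φ_v⟩ = (1 + q(u)r(v))²`;
(ii) `φ_{uv} = 0` (minimality);
(iii) where `1 + q(u)r(v) ≠ 0`, `ψ` is a unit normal (the Gauss map);
(iv) `⟨φ_{uu}, ψ⟩ = q'` and `⟨φ_{vv}, ψ⟩ = r'`, i.e. `e^{ω} = (1+qr)²`,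
     `Q = q_u`, `R = r_v`. -/
theorem statement16 (q r : ℝ → ℝ) (hq : ContDiff ℝ (⊤ : ℕ∞) q) (hr : ContDiff ℝ (⊤ : ℕ∞) r) :
    (∀ p : ℝ × ℝ,
      mink (pdu (weier q r) p) (pdu (weier q r) p) = 0 ∧
      mink (pdv (weier q r) p) (pdv (weier q r) p) = 0 ∧
      2 * mink (pdu (weier q r) p) (pdv (weier q r) p) = (1 + q p.1 * r p.2) ^ 2) ∧
    (∀ p : ℝ × ℝ, pdv (pdu (weier q r)) p = 0) ∧
    (∀ p : ℝ × ℝ, 1 + q p.1 * r p.2 ≠ 0 →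
      mink (weierGauss q r p) (weierGauss q r p) = 1 ∧
      mink (weierGauss q r p) (pdu (weier q r) p) = 0 ∧
      mink (weierGauss q r p) (pdv (weier q r) p) = 0) ∧
    (∀ p : ℝ × ℝ, 1 + q p.1 * r p.2 ≠ 0 →
      mink (pdu (pdu (weier q r)) p) (weierGauss q r p) = deriv q p.1 ∧
      mink (pdv (pdv (weier q r)) p) (weierGauss q r p) = deriv r p.2) := by
  refine ⟨fun p => ?_, fun p => pdv_pdu_weier hq.continuous p, fun p h => ?_, fun p h => ?_⟩
  · rw [pdu_weier hq.continuous, pdv_weier hr.continuous]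
    refine ⟨?_, ?_, ?_⟩ <;>
      simp [mink] <;> ring
  · rw [pdu_weier hq.continuous, pdv_weier hr.continuous]
    unfold weierGauss
    refine ⟨?_, ?_, ?_⟩ <;>
      simp [mink] <;> field_simp <;> ring
  · rw [pduu_weier hq, pdvv_weier hr]
    unfold weierGauss
    have h' : 1 + r p.2 * q p.1 ≠ 0 := by rwa [mul_comm]
    constructor <;>
      · simp [mink]
        field_simp
        ring
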